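/- For every x₀ ∈ ℝ² the function k ↦ sin²(⟨k, x₀⟩/2)/(|k|²(1+|k|²)) is integrable on ℝ², i.e. ∫_{ℝ²} sin²(⟨k, x₀⟩/2)/(|k|²(1+|k|²)) dk < ∞. -/

import Mathlib

open MeasureTheory Module

/-!
Since `sin² t ≤ min(1, t²)` and `|⟪k, x₀⟫| ≤ ‖k‖ ‖x₀‖`, the integrand is at most
`(1 + ‖x₀‖²/4) (1 + ‖k‖²)⁻²`: near the origin the `‖k‖²` in the denominator is cancelled by the
numerator. The Japanese bracket `(1 + ‖k‖²)^(-s/2)` is integrable as soon as `s` exceeds the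
dimension, and `4 > 2`.
-/

theorem div_sq_mul_one_add_sq_le {s c r : ℝ} (hc : 0 ≤ c) (hs : s ≤ 1) (hsc : s ≤ c * r ^ 2) :
    s / (r ^ 2 * (1 + r ^ 2)) ≤ (c + 1) * (1 + r ^ 2) ^ (-4 / 2 : ℝ) := by
  have hbracket : (1 + r ^ 2) ^ (-4 / 2 : ℝ) = ((1 + r ^ 2) ^ 2)⁻¹ := by
    rw [show (-4 / 2 : ℝ) = -(2 : ℕ) by norm_num, Real.rpow_neg (by positivity),
      Real.rpow_natCast]
  rw [hbracket, ← div_eq_mul_inv]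
  rcases eq_or_ne r 0 with rfl | hr
  · simp only [ne_eq, OfNat.ofNat_ne_zero, not_false_eq_true, zero_pow, zero_mul, div_zero]
    positivity
  have hnum : s * (1 + r ^ 2) ≤ (c + 1) * r ^ 2 := by nlinarith [sq_nonneg r]
  rw [div_le_div_iff₀ (by positivity) (by positivity)]
  nlinarith [sq_nonneg r, mul_le_mul_of_nonneg_right hnum (by positivity : (0 : ℝ) ≤ 1 + r ^ 2)]

section

variable {E : Type*} [NormedAddCommGroup E] [InnerProductSpace ℝ E]

theorem sin_sq_inner_div_two_le (k x₀ : E) :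
    Real.sin (inner ℝ k x₀ / 2) ^ 2 ≤ ‖x₀‖ ^ 2 / 4 * ‖k‖ ^ 2 := by
  have hinner : inner ℝ k x₀ ^ 2 ≤ (‖k‖ * ‖x₀‖) ^ 2 :=
    sq_le_sq.2 ((abs_real_inner_le_norm k x₀).trans (le_abs_self _))
  calc Real.sin (inner ℝ k x₀ / 2) ^ 2 ≤ (inner ℝ k x₀ / 2) ^ 2 := Real.sin_sq_le_sq
    _ ≤ ‖x₀‖ ^ 2 / 4 * ‖k‖ ^ 2 := by nlinarith

variable [FiniteDimensional ℝ E] [MeasurableSpace E] [BorelSpace E]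

theorem integrable_sin_sq_inner_div_sq_mul_one_add_sq (μ : Measure E) [μ.IsAddHaarMeasure]
    (hE : finrank ℝ E < 4) (x₀ : E) :
    Integrable (fun k ↦ Real.sin (inner ℝ k x₀ / 2) ^ 2 / (‖k‖ ^ 2 * (1 + ‖k‖ ^ 2))) μ := by
  have hbracket : Integrable (fun k : E ↦ (‖x₀‖ ^ 2 / 4 + 1) * (1 + ‖k‖ ^ 2) ^ (-4 / 2 : ℝ)) μ :=
    (integrable_rpow_neg_one_add_norm_sq (by exact_mod_cast hE)).const_mul _
  refine hbracket.mono' (Measurable.aestronglyMeasurable (by fun_prop)) (ae_of_all _ fun k ↦ ?_)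
  rw [Real.norm_of_nonneg (by positivity)]
  exact div_sq_mul_one_add_sq_le (by positivity) (Real.sin_sq_le_one _)
    (sin_sq_inner_div_two_le k x₀)

end

theorem stmt_14 (x₀ : EuclideanSpace ℝ (Fin 2)) :
    Integrable (fun k : EuclideanSpace ℝ (Fin 2) =>
      Real.sin ((inner ℝ k x₀ : ℝ) / 2) ^ 2 / (‖k‖ ^ 2 * (1 + ‖k‖ ^ 2))) volume ∧
    ∫⁻ k : EuclideanSpace ℝ (Fin 2),
      ENNReal.ofReal (Real.sin ((inner ℝ k x₀ : ℝ) / 2) ^ 2 / (‖k‖ ^ 2 * (1 + ‖k‖ ^ 2)))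
        ∂volume < ⊤ := by
  have hint := integrable_sin_sq_inner_div_sq_mul_one_add_sq volume (by simp) x₀
  exact ⟨hint, hint.lintegral_lt_top⟩
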